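/- If wₙ ≥ 0 for all n and (wₙ) does not converge to 0, then T_w = ∑ₙ wₙ gₙ is nowhere differentiable on [0,1]. -/

import Mathlib

open Filter Topology

/-- The (viscosity/Fréchet) subdifferential of `f : ℝ → ℝ`, relative to the domain `s`,
at the point `x`: the set of `c` with
`liminf_{h → 0, x + h ∈ s} (f (x + h) - f x - c * h) / |h| ≥ 0`. -/
def subdifferentialWithin (f : ℝ → ℝ) (s : Set ℝ) (x : ℝ) : Set ℝ :=
  {c | ∀ ε > (0 : ℝ), ∀ᶠ h in 𝓝[≠] (0 : ℝ), x + h ∈ s → -ε ≤ (f (x + h) - f x - c * h) / |h|}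

/-- The superdifferential `∂⁺f(x) = -∂(-f)(x)`. -/
def superdifferentialWithin (f : ℝ → ℝ) (s : Set ℝ) (x : ℝ) : Set ℝ :=
  {c | -c ∈ subdifferentialWithin (fun y => -f y) s x}

/-- The set of midpoints of the connected components of the complement of `s` (the
bounded components being the open intervals between consecutive points of `s`). -/
def midpoints (s : Set ℝ) : Set ℝ :=
  {m | ∃ a ∈ s, ∃ b ∈ s, a < b ∧ Set.Ioo a b ∩ s = ∅ ∧ m = (a + b) / 2}

/-- Around any point of `[0,1]` there is a "gap" of a finite set `s` containing `0` and `1`. -/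
lemma gap_around (s : Set ℝ) (hfin : s.Finite) (h0 : (0:ℝ) ∈ s) (h1 : (1:ℝ) ∈ s)
    {x : ℝ} (hx : x ∈ Set.Icc (0:ℝ) 1) :
    ∃ a ∈ s, ∃ b ∈ s, a ≤ x ∧ x ≤ b ∧ a < b ∧ Set.Ioo a b ∩ s = ∅ := by
  rcases lt_or_eq_of_le hx.2 with hx1 | hx1
  · -- x < 1
    obtain ⟨a, ⟨haS, hax⟩, hamax⟩ :=
      Set.Finite.exists_maximalFor id {d ∈ s | d ≤ x}
        (hfin.subset (Set.sep_subset _ _)) ⟨0, h0, hx.1⟩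
    obtain ⟨b, ⟨hbS, hbx⟩, hbmin⟩ :=
      Set.Finite.exists_minimalFor id {d ∈ s | x < d}
        (hfin.subset (Set.sep_subset _ _)) ⟨1, h1, hx1⟩
    refine ⟨a, haS, b, hbS, hax, hbx.le, lt_of_le_of_lt hax hbx, ?_⟩
    ext d
    simp only [Set.mem_inter_iff, Set.mem_Ioo, Set.mem_empty_iff_false, iff_false, not_and]
    rintro ⟨had, hdb⟩ hds
    rcases le_or_gt d x with hdx | hdx
    · exact absurd (hamax ⟨hds, hdx⟩ had.le) (not_le.2 had)
    · exact absurd (hbmin ⟨hds, hdx⟩ hdb.le) (not_le.2 hdb)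
  · -- x = 1
    obtain ⟨a, ⟨haS, hax⟩, hamax⟩ :=
      Set.Finite.exists_maximalFor id {d ∈ s | d < 1}
        (hfin.subset (Set.sep_subset _ _)) ⟨0, h0, one_pos⟩
    refine ⟨a, haS, 1, h1, by rw [← hx1] at hax; exact hax.le, hx1.le, hax, ?_⟩
    ext d
    simp only [Set.mem_inter_iff, Set.mem_Ioo, Set.mem_empty_iff_false, iff_false, not_and]
    rintro ⟨had, hd1⟩ hds
    exact absurd (hamax ⟨hds, hd1⟩ had.le) (not_le.2 had)

set_option maxHeartbeats 1000000 in
theorem stmt8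
(D : ℕ → Set ℝ) (α : ℕ → ℝ) (ρ : ℝ) (w : ℕ → ℝ)
    (hD0 : (0 : ℝ) ∈ D 0) (hD1 : (1 : ℝ) ∈ D 0)
    (hDsub : ∀ n, D n ⊆ Set.Icc 0 1)
    (hDfin : ∀ n, (D n).Finite)
    (hDmono : ∀ n, D n ⊆ D (n + 1))
    (hρ : ρ ∈ Set.Ioc (0 : ℝ) 1)
    (hα : Summable α)
    (hgapU : ∀ n, ∀ a ∈ D n, ∀ b ∈ D n, a < b → Set.Ioo a b ∩ D n = ∅ → b - a ≤ α n)
    (hgapL : ∀ n, ∀ a ∈ D n, ∀ b ∈ D n, a < b → ρ * α n ≤ b - a)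
    (hwα : Summable (fun n => |w n * α n|))
    (hwpos : ∀ n, 0 ≤ w n) (hwc0 : ¬ Tendsto w atTop (𝓝 0)) :
    ∀ x ∈ Set.Icc (0 : ℝ) 1,
      ¬ DifferentiableWithinAt ℝ (fun z => ∑' n : ℕ, w n * Metric.infDist z (D n))
        (Set.Icc 0 1) x := by
  intro x hx hdiff
  have hmono : Monotone D := monotone_nat_of_le_succ hDmono
  have h0 : ∀ n, (0:ℝ) ∈ D n := fun n => hmono (Nat.zero_le n) hD0
  have h1 : ∀ n, (1:ℝ) ∈ D n := fun n => hmono (Nat.zero_le n) hD1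
  -- α n is positive
  have hαpos : ∀ n, 0 < α n := by
    intro n
    obtain ⟨a, haD, b, hbD, -, -, hab, hgap⟩ :=
      gap_around (D n) (hDfin n) (h0 n) (h1 n) (Set.left_mem_Icc.2 one_pos.le)
    have := hgapU n a haD b hbD hab hgap
    linarith
  -- distance to D k is at most α k / 2 on [0,1]
  have hhalf : ∀ k, ∀ y ∈ Set.Icc (0:ℝ) 1, Metric.infDist y (D k) ≤ α k / 2 := by
    intro k y hy
    obtain ⟨a, haD, b, hbD, hay, hyb, hab, hgap⟩ :=
      gap_around (D k) (hDfin k) (h0 k) (h1 k) hy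
    have hba := hgapU k a haD b hbD hab hgap
    rcases le_or_gt (y - a) (b - y) with h | h
    · have := Metric.infDist_le_dist_of_mem (x := y) haD
      rw [Real.dist_eq, abs_of_nonneg (by linarith)] at this
      linarith
    · have := Metric.infDist_le_dist_of_mem (x := y) hbD
      rw [Real.dist_eq, abs_of_nonpos (by linarith)] at this
      linarith
  -- summability of the series at each point of [0,1]
  have hsum : ∀ y ∈ Set.Icc (0:ℝ) 1, Summable (fun k => w k * Metric.infDist y (D k)) := by
    intro y hy
    refine Summable.of_nonneg_of_le
      (fun k => mul_nonneg (hwpos k) Metric.infDist_nonneg) (fun k => ?_) hwα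
    have h2 := hhalf k y hy
    have h3 : w k * Metric.infDist y (D k) ≤ w k * (α k / 2) :=
      mul_le_mul_of_nonneg_left h2 (hwpos k)
    have h4 : w k * α k ≤ |w k * α k| := le_abs_self _
    nlinarith [hwpos k, hαpos k]
  set T : ℝ → ℝ := fun z => ∑' n : ℕ, w n * Metric.infDist z (D n) with hTdef
  -- get δ > 0 with w n ≥ δ frequently
  rw [NormedAddCommGroup.tendsto_nhds_zero] at hwc0
  push_neg at hwc0
  obtain ⟨δ, hδpos, hfreq⟩ := hwc0
  -- the little-o estimate from differentiability
  have hT := hdiff.hasDerivWithinAt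
  set c := derivWithin T (Set.Icc 0 1) x with hc
  rw [hasDerivWithinAt_iff_isLittleO] at hT
  have hev := hT.def (show (0:ℝ) < δ/8 by positivity)
  rw [eventually_nhdsWithin_iff, Metric.eventually_nhds_iff] at hev
  obtain ⟨r, hrpos, hball⟩ := hev
  -- choose n with w n ≥ δ and w n * α n < δ * r
  have htendw : Tendsto (fun n => |w n * α n|) atTop (𝓝 0) := hwα.tendsto_atTop_zero
  have hev2 : ∀ᶠ n in atTop, |w n * α n| < δ * r :=
    htendw.eventually (Tendsto.eventually_lt_const (by positivity) tendsto_id)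
  obtain ⟨n, hn1, hn2⟩ := (hfreq.and_eventually hev2).exists
  have hwδ : δ ≤ w n := by
    rw [Real.norm_eq_abs, abs_of_nonneg (hwpos n)] at hn1
    exact hn1
  have hsmallα : w n * α n < δ * r := by
    rwa [abs_of_nonneg (mul_nonneg (hwpos n) (hαpos n).le)] at hn2
  -- the gap of D n around x
  obtain ⟨a, haD, b, hbD, hax, hxb, hab, hgap⟩ :=
    gap_around (D n) (hDfin n) (h0 n) (h1 n) hx
  have hba : b - a ≤ α n := hgapU n a haD b hbD hab hgap
  have hbapos : 0 < b - a := sub_pos.2 hab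
  have hbar : b - a < r := by
    have h5 : δ * (b - a) ≤ w n * α n := by nlinarith [hαpos n]
    nlinarith
  set m : ℝ := (a + b) / 2 with hm
  have haI : a ∈ Set.Icc (0:ℝ) 1 := hDsub n haD
  have hbI : b ∈ Set.Icc (0:ℝ) 1 := hDsub n hbD
  have hmI : m ∈ Set.Icc (0:ℝ) 1 := ⟨by rw [hm]; obtain ⟨h, _⟩ := haI; obtain ⟨h', _⟩ := hbI; linarith,
    by rw [hm]; obtain ⟨_, h⟩ := haI; obtain ⟨_, h'⟩ := hbI; linarith⟩
  -- F k y : the k-th term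
  set F : ℕ → ℝ → ℝ := fun k y => w k * Metric.infDist y (D k) with hF
  have Sa := hsum a haI
  have Sb := hsum b hbI
  have Sm := hsum m hmI
  -- every point of D n avoids the open gap
  have havoid : ∀ p ∈ D n, p ≤ a ∨ b ≤ p := by
    intro p hp
    by_contra hcon
    push_neg at hcon
    have : p ∈ Set.Ioo a b ∩ D n := ⟨⟨hcon.1, hcon.2⟩, hp⟩
    rw [hgap] at this
    exact this
  -- nonnegativity of each second-difference term
  have hnonneg : ∀ k, 0 ≤ 2 * F k m - F k a - F k b := by
    intro k
    rcases lt_or_ge k n with hkn | hkn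
    · -- k < n : the nearest point of D k to m avoids (a,b)
      obtain ⟨p, hp, hpd⟩ := ((hDfin k).isCompact).exists_infDist_eq_dist ⟨0, h0 k⟩ m
      have hpn : p ∈ D n := hmono hkn.le hp
      have hda := Metric.infDist_le_dist_of_mem (x := a) hp
      have hdb := Metric.infDist_le_dist_of_mem (x := b) hp
      rcases havoid p hpn with hpa | hbp
      · -- p ≤ a
        have hmp : Metric.infDist m (D k) = m - p := by
          rw [hpd, Real.dist_eq, abs_of_nonneg (by rw [hm]; linarith)]
        rw [Real.dist_eq, abs_of_nonneg (by linarith)] at hda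
        rw [Real.dist_eq, abs_of_nonneg (by linarith)] at hdb
        have h6 : Metric.infDist a (D k) + Metric.infDist b (D k)
            ≤ 2 * Metric.infDist m (D k) := by rw [hmp, hm]; linarith
        simp only [hF]
        nlinarith [hwpos k]
      · -- b ≤ p
        have hmp : Metric.infDist m (D k) = p - m := by
          rw [hpd, Real.dist_eq, abs_of_nonpos (by rw [hm]; linarith)]
          ring
        rw [Real.dist_eq, abs_of_nonpos (by linarith)] at hda
        rw [Real.dist_eq, abs_of_nonpos (by linarith)] at hdb
        have h6 : Metric.infDist a (D k) + Metric.infDist b (D k)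
            ≤ 2 * Metric.infDist m (D k) := by rw [hmp, hm]; linarith
        simp only [hF]
        nlinarith [hwpos k]
    · -- n ≤ k : a, b ∈ D k
      have ha0 : Metric.infDist a (D k) = 0 := Metric.infDist_zero_of_mem (hmono hkn haD)
      have hb0 : Metric.infDist b (D k) = 0 := Metric.infDist_zero_of_mem (hmono hkn hbD)
      simp only [hF, ha0, hb0, mul_zero, sub_zero]
      have := Metric.infDist_nonneg (s := D k) (x := m)
      nlinarith [hwpos k]
  -- the n-th term is at least w n * (b - a)
  have hmain : w n * (b - a) ≤ 2 * F n m - F n a - F n b := by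
    have ha0 : Metric.infDist a (D n) = 0 := Metric.infDist_zero_of_mem haD
    have hb0 : Metric.infDist b (D n) = 0 := Metric.infDist_zero_of_mem hbD
    have hdm : (b - a) / 2 ≤ Metric.infDist m (D n) := by
      by_contra hcon
      push_neg at hcon
      obtain ⟨y, hyD, hy⟩ := (Metric.infDist_lt_iff ⟨a, haD⟩).1 hcon
      rw [Real.dist_eq] at hy
      rcases havoid y hyD with h | h
      · rw [abs_of_nonneg (by rw [hm]; linarith)] at hy
        rw [hm] at hy; linarith
      · rw [abs_of_nonpos (by rw [hm]; linarith)] at hy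
        rw [hm] at hy; linarith
    simp only [hF, ha0, hb0, mul_zero, sub_zero]
    nlinarith [hwpos n]
  -- the global second difference is at least w n * (b - a)
  have hSsum : Summable (fun k => 2 * F k m - F k a - F k b) :=
    ((Sm.mul_left 2).sub Sa).sub Sb
  have e1 : (∑' k, (2 * F k m - F k a - F k b))
      = (∑' k, (2 * F k m - F k a)) - ∑' k, F k b := Summable.tsum_sub ((Sm.mul_left 2).sub Sa) Sb
  have e2 : (∑' k, (2 * F k m - F k a)) = (∑' k, 2 * F k m) - ∑' k, F k a :=
    Summable.tsum_sub (Sm.mul_left 2) Sa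
  have e3 : (∑' k, 2 * F k m) = 2 * ∑' k, F k m := tsum_mul_left
  have hsplit : ∑' k, (2 * F k m - F k a - F k b) = 2 * T m - T a - T b := by
    rw [e1, e2, e3]
  have hlow : w n * (b - a) ≤ 2 * T m - T a - T b := by
    rw [← hsplit]
    exact le_trans hmain (Summable.le_tsum hSsum n (fun j _ => hnonneg j))
  -- the upper bound from differentiability
  have hEa := hball (show dist a x < r by
      rw [Real.dist_eq, abs_of_nonpos (by linarith)]; linarith) haI
  have hEb := hball (show dist b x < r by
      rw [Real.dist_eq, abs_of_nonneg (by linarith)]; linarith) hbI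
  have hEm := hball (show dist m x < r by
      rw [Real.dist_eq]; rcases le_or_gt m x with h | h
      · rw [abs_of_nonpos (by linarith)]; rw [hm] at h ⊢; linarith
      · rw [abs_of_nonneg (by linarith)]; rw [hm] at h ⊢; linarith) hmI
  simp only [Real.norm_eq_abs, smul_eq_mul] at hEa hEb hEm
  have hbnda : |a - x| ≤ b - a := by rw [abs_of_nonpos (by linarith)]; linarith
  have hbndb : |b - x| ≤ b - a := by rw [abs_of_nonneg (by linarith)]; linarith
  have hbndm : |m - x| ≤ b - a := by
    rcases le_or_gt m x with h | h
    · rw [abs_of_nonpos (by linarith)]; rw [hm] at h ⊢; linarith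
    · rw [abs_of_nonneg (by linarith)]; rw [hm] at h ⊢; linarith
  have hδ8 : (0:ℝ) ≤ δ/8 := by positivity
  have hEa' : |T a - T x - (a - x) * c| ≤ δ/8 * (b - a) :=
    le_trans hEa (mul_le_mul_of_nonneg_left hbnda hδ8)
  have hEb' : |T b - T x - (b - x) * c| ≤ δ/8 * (b - a) :=
    le_trans hEb (mul_le_mul_of_nonneg_left hbndb hδ8)
  have hEm' : |T m - T x - (m - x) * c| ≤ δ/8 * (b - a) :=
    le_trans hEm (mul_le_mul_of_nonneg_left hbndm hδ8)
  have hid : 2 * T m - T a - T b =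
      2 * (T m - T x - (m - x) * c) - (T a - T x - (a - x) * c) - (T b - T x - (b - x) * c) := by
    rw [hm]; ring
  have h7 := abs_le.1 hEa'
  have h8 := abs_le.1 hEb'
  have h9 := abs_le.1 hEm'
  have h10 : δ * (b - a) ≤ w n * (b - a) := mul_le_mul_of_nonneg_right hwδ hbapos.le
  have h11 : 0 < δ * (b - a) := mul_pos hδpos hbapos
  linarith [hlow, hid]
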